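/- Tree-like model property: every satisfiable Cycle-CTL* state formula is satisfiable in a Kripke structure that is a tree with back edges. That is, if K ⊨ φ for some Kripke structure K, then there is a tree with back edges K' with K' ⊨ φ. -/

import Mathlib

namespace CycleCTL

universe u v

/-- A Kripke structure over a set `AP` of atomic propositions. -/
structure Kripke (AP : Type) : Type (u + 1) where
  World : Type u
  init : World
  R : World → World → Prop
  label : World → Set AP
  serial : ∀ w, ∃ v, R w v

variable {AP : Type}

/-- An (infinite) path of a Kripke structure. -/
def IsPath (K : Kripke.{u} AP) (π : ℕ → K.World) : Prop :=
  ∀ i, K.R (π i) (π (i + 1))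

/-- A cycle: a path visiting its first world infinitely often. -/
def IsCycle (K : Kripke.{u} AP) (π : ℕ → K.World) : Prop :=
  IsPath K π ∧ ∀ i, ∃ j, i < j ∧ π j = π 0

mutual
  /-- State formulas of Cycle-CTL*. -/
  inductive StateForm (AP : Type) : Type where
    | atom : AP → StateForm AP
    | not  : StateForm AP → StateForm AP
    | and  : StateForm AP → StateForm AP → StateForm AP
    | or   : StateForm AP → StateForm AP → StateForm AP
    | E    : PathForm AP → StateForm AP
    | A    : PathForm AP → StateForm AP
    | Ec   : PathForm AP → StateForm AP
    | Ac   : PathForm AP → StateForm AP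
  /-- Path formulas of Cycle-CTL*. -/
  inductive PathForm (AP : Type) : Type where
    | state : StateForm AP → PathForm AP
    | not   : PathForm AP → PathForm AP
    | and   : PathForm AP → PathForm AP → PathForm AP
    | or    : PathForm AP → PathForm AP → PathForm AP
    | next  : PathForm AP → PathForm AP
    | untl  : PathForm AP → PathForm AP → PathForm AP
end

mutual
  /-- Satisfaction of a state formula at a world. -/
  def SatS (K : Kripke.{u} AP) : K.World → StateForm AP → Prop
    | w, .atom p => p ∈ K.label w
    | w, .not φ => ¬ SatS K w φ
    | w, .and φ₁ φ₂ => SatS K w φ₁ ∧ SatS K w φ₂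
    | w, .or φ₁ φ₂ => SatS K w φ₁ ∨ SatS K w φ₂
    | w, .E ψ => ∃ π, IsPath K π ∧ π 0 = w ∧ SatP K π 0 ψ
    | w, .A ψ => ∀ π, IsPath K π → π 0 = w → SatP K π 0 ψ
    | w, .Ec ψ => ∃ π, IsCycle K π ∧ π 0 = w ∧ SatP K π 0 ψ
    | w, .Ac ψ => ∀ π, IsCycle K π → π 0 = w → SatP K π 0 ψ
  /-- Satisfaction of a path formula on a path at a position. -/
  def SatP (K : Kripke.{u} AP) : (ℕ → K.World) → ℕ → PathForm AP → Prop
    | π, i, .state φ => SatS K (π i) φ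
    | π, i, .not ψ => ¬ SatP K π i ψ
    | π, i, .and ψ₁ ψ₂ => SatP K π i ψ₁ ∧ SatP K π i ψ₂
    | π, i, .or ψ₁ ψ₂ => SatP K π i ψ₁ ∨ SatP K π i ψ₂
    | π, i, .next ψ => SatP K π (i + 1) ψ
    | π, i, .untl ψ₁ ψ₂ => ∃ k, SatP K π (i + k) ψ₂ ∧ ∀ j < k, SatP K π (i + j) ψ₁
end

/-- `K ⊨ φ` : satisfaction at the initial world. -/
def Sat (K : Kripke.{u} AP) (φ : StateForm AP) : Prop := SatS K K.init φ

/-- `⊤` as a path formula, abbreviating `p ∨ ¬p`. -/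
def topP (p : AP) : PathForm AP := .or (.state (.atom p)) (.not (.state (.atom p)))

/-- `F ψ` abbreviates `⊤ U ψ`. -/
def FP (p : AP) (ψ : PathForm AP) : PathForm AP := .untl (topP p) ψ

/-- `G ψ` abbreviates `¬(⊤ U ¬ψ)`. -/
def GP (p : AP) (ψ : PathForm AP) : PathForm AP := .not (FP p (.not ψ))


/-- `(W, R₀)` is a tree with root `r`: every node is reachable from the root, the relation is
acyclic, every node has at most one parent, and the root has no parent. -/
def IsTree {W : Type u} (R : W → W → Prop) (r : W) : Prop :=
  (∀ w, Relation.ReflTransGen R r w) ∧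
  (∀ w, ¬ Relation.TransGen R w w) ∧
  (∀ w v v', R v w → R v' w → v = v') ∧
  (∀ v, ¬ R v r)

/-- `(R₀, f)` is a tree decomposition of `K`, witnessing that `K` is a tree with back edges:
(i) `(W, R₀)` is a tree rooted at the initial world; (ii) `R = R₀ ∪ {(w, f w)}`;
(iii) `f w` is a (proper) ancestor of `w`; (iv) back edges do not cross. -/
def IsTreeDecomp (K : Kripke.{u} AP) (R₀ : K.World → K.World → Prop)
    (f : K.World → Option K.World) : Prop :=
  IsTree R₀ K.init ∧
  (∀ w v, K.R w v ↔ (R₀ w v ∨ f w = some v)) ∧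
  (∀ w v, f w = some v → Relation.TransGen R₀ v w) ∧
  (∀ w₁ w₂ u₂, (f w₁).isSome → f w₂ = some u₂ →
    Relation.TransGen R₀ u₂ w₁ → Relation.TransGen R₀ w₁ w₂ → f w₁ = f w₂)

/-- `K` is a tree with back edges if it admits a tree decomposition. -/
def IsTreeWithBackEdges (K : Kripke.{u} AP) : Prop :=
  ∃ R₀ f, IsTreeDecomp K R₀ f

/-!
Unravel `K` into a tree whose nodes are stacks of worlds of `K`, with a back edge from a node to
an ancestor whose world is a `K`-successor of the node's world; back edges are only added when
this keeps them non-crossing. Projecting a node to its top world maps paths and cycles of the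
unravelling to paths and cycles of `K`. Conversely, a path of `K` lifts to a path that descends in
the tree and jumps back to its start by a back edge whenever the path revisits its first world,
so cycles lift to cycles. A map with these lifting properties preserves every Cycle-CTL* formula.
-/

section Suffix

variable {α : Type*} {l s : List α} {n : ℕ}

theorem _root_.List.length_rtake_of_le (h : n ≤ l.length) : (l.rtake n).length = n := by
  simp [List.rtake]; omega

theorem _root_.List.rtake_suffix (l : List α) (n : ℕ) : l.rtake n <:+ l :=
  List.drop_suffix _ _

theorem _root_.List.rtake_cons_of_le (a : α) (h : n ≤ l.length) : (a :: l).rtake n = l.rtake n := by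
  simp only [List.rtake, List.length_cons, Nat.sub_add_comm h, List.drop_succ_cons]

theorem _root_.List.rtake_append_length (l s : List α) : (l ++ s).rtake s.length = s := by
  simp [List.rtake]

theorem _root_.List.IsSuffix.rtake_eq (h : s <:+ l) (hn : n ≤ s.length) :
    l.rtake n = s.rtake n := by
  obtain ⟨t, rfl⟩ := h
  simp only [List.rtake, List.length_append]
  rw [show t.length + s.length - n = t.length + (s.length - n) by omega, ← List.drop_drop,
    List.drop_left]

theorem _root_.List.mem_take_of_cons_suffix {a : α} (h : a :: s <:+ l) (hn : n ≤ s.length) :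
    a ∈ l.take (l.length - n) := by
  obtain ⟨t, rfl⟩ := h
  rw [List.length_append, List.length_cons,
    show t.length + (s.length + 1) - n = t.length + (s.length - n + 1) by omega,
    List.take_length_add_append]
  simp

end Suffix

section Cover

variable {K' : Kripke.{v} AP} {K : Kripke.{u} AP} {g : K'.World → K.World}

structure IsCover (g : K'.World → K.World) : Prop where
  label_eq : ∀ x, K'.label x = K.label (g x)
  rel_map : ∀ {x y}, K'.R x y → K.R (g x) (g y)
  exists_lift : ∀ x p, IsPath K p → p 0 = g x →
    ∃ q, IsPath K' q ∧ q 0 = x ∧ g ∘ q = p ∧ (IsCycle K p → IsCycle K' q)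

namespace IsCover

theorem isPath_comp (hg : IsCover g) {q : ℕ → K'.World} (hq : IsPath K' q) :
    IsPath K (g ∘ q) :=
  fun i => hg.rel_map (hq i)

theorem isCycle_comp (hg : IsCover g) {q : ℕ → K'.World} (hq : IsCycle K' q) :
    IsCycle K (g ∘ q) :=
  ⟨hg.isPath_comp hq.1, fun i => (hq.2 i).imp fun _ ⟨hij, hj⟩ => ⟨hij, congrArg g hj⟩⟩

theorem exists_path_iff (hg : IsCover g) (x : K'.World) (P : (ℕ → K.World) → Prop) :
    (∃ q, IsPath K' q ∧ q 0 = x ∧ P (g ∘ q)) ↔ ∃ p, IsPath K p ∧ p 0 = g x ∧ P p := by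
  constructor
  · rintro ⟨q, hq, rfl, hP⟩
    exact ⟨g ∘ q, hg.isPath_comp hq, rfl, hP⟩
  · rintro ⟨p, hp, hp0, hP⟩
    obtain ⟨q, hq, hq0, rfl, -⟩ := hg.exists_lift x p hp hp0
    exact ⟨q, hq, hq0, hP⟩

theorem exists_cycle_iff (hg : IsCover g) (x : K'.World) (P : (ℕ → K.World) → Prop) :
    (∃ q, IsCycle K' q ∧ q 0 = x ∧ P (g ∘ q)) ↔ ∃ p, IsCycle K p ∧ p 0 = g x ∧ P p := by
  constructor
  · rintro ⟨q, hq, rfl, hP⟩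
    exact ⟨g ∘ q, hg.isCycle_comp hq, rfl, hP⟩
  · rintro ⟨p, hp, hp0, hP⟩
    obtain ⟨q, -, hq0, rfl, hq⟩ := hg.exists_lift x p hp.1 hp0
    exact ⟨q, hq hp, hq0, hP⟩

theorem forall_path_iff (hg : IsCover g) (x : K'.World) (P : (ℕ → K.World) → Prop) :
    (∀ q, IsPath K' q → q 0 = x → P (g ∘ q)) ↔ ∀ p, IsPath K p → p 0 = g x → P p := by
  simpa using (hg.exists_path_iff x fun p => ¬ P p).not

theorem forall_cycle_iff (hg : IsCover g) (x : K'.World) (P : (ℕ → K.World) → Prop) :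
    (∀ q, IsCycle K' q → q 0 = x → P (g ∘ q)) ↔ ∀ p, IsCycle K p → p 0 = g x → P p := by
  simpa using (hg.exists_cycle_iff x fun p => ¬ P p).not

mutual

theorem satS_iff (hg : IsCover g) :
    ∀ (φ : StateForm AP) (x : K'.World), SatS K' x φ ↔ SatS K (g x) φ
  | .atom a, x => by simp only [SatS, hg.label_eq]
  | .not φ, x => not_congr (hg.satS_iff φ x)
  | .and φ₁ φ₂, x => and_congr (hg.satS_iff φ₁ x) (hg.satS_iff φ₂ x)
  | .or φ₁ φ₂, x => or_congr (hg.satS_iff φ₁ x) (hg.satS_iff φ₂ x)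
  | .E ψ, x => (exists_congr fun q => and_congr_right' <| and_congr_right' <|
      hg.satP_iff ψ q 0).trans (hg.exists_path_iff x fun p => SatP K p 0 ψ)
  | .A ψ, x => (forall_congr' fun q => imp_congr_right fun _ => imp_congr_right fun _ =>
      hg.satP_iff ψ q 0).trans (hg.forall_path_iff x fun p => SatP K p 0 ψ)
  | .Ec ψ, x => (exists_congr fun q => and_congr_right' <| and_congr_right' <|
      hg.satP_iff ψ q 0).trans (hg.exists_cycle_iff x fun p => SatP K p 0 ψ)
  | .Ac ψ, x => (forall_congr' fun q => imp_congr_right fun _ => imp_congr_right fun _ =>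
      hg.satP_iff ψ q 0).trans (hg.forall_cycle_iff x fun p => SatP K p 0 ψ)

theorem satP_iff (hg : IsCover g) :
    ∀ (ψ : PathForm AP) (q : ℕ → K'.World) (i : ℕ), SatP K' q i ψ ↔ SatP K (g ∘ q) i ψ
  | .state φ, q, i => hg.satS_iff φ (q i)
  | .not ψ, q, i => not_congr (hg.satP_iff ψ q i)
  | .and ψ₁ ψ₂, q, i => and_congr (hg.satP_iff ψ₁ q i) (hg.satP_iff ψ₂ q i)
  | .or ψ₁ ψ₂, q, i => or_congr (hg.satP_iff ψ₁ q i) (hg.satP_iff ψ₂ q i)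
  | .next ψ, q, i => hg.satP_iff ψ q (i + 1)
  | .untl ψ₁ ψ₂, q, i => exists_congr fun k => and_congr (hg.satP_iff ψ₂ q (i + k))
      (forall₂_congr fun j _ => hg.satP_iff ψ₁ q (i + j))

end

end IsCover

end Cover

section Unravel

variable (K : Kripke.{u} AP)

/- A node of the unravelling is the stack of its entries from itself up to the root. An entry
`(v, c)` with `c ≠ 0` carries a back edge to the ancestor of depth `c`, i.e. the suffix of
length `c`. -/
def world : List (K.World × ℕ) → K.World
  | [] => K.init
  | (v, _) :: _ => v

def backDepth {W : Type*} : List (W × ℕ) → ℕ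
  | [] => 0
  | (_, c) :: _ => c

/-- The last clause keeps back edges non-crossing: every entry strictly between the new entry
and the target of its back edge has either no back edge or one to the same target. -/
def CanAttach (ℓ : List (K.World × ℕ)) (v : K.World) (c : ℕ) : Prop :=
  c ≠ 0 → c ≤ ℓ.length ∧ K.R v (world K (ℓ.rtake c)) ∧
    ∀ e ∈ ℓ.take (ℓ.length - c), e.2 = 0 ∨ e.2 = c

inductive IsNode : List (K.World × ℕ) → Prop
  | root : IsNode [(K.init, 0)]
  | cons {ℓ v c} : IsNode ℓ → K.R (world K ℓ) v → CanAttach K ℓ v c → IsNode ((v, c) :: ℓ)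

variable {K}

namespace IsNode

variable {ℓ s : List (K.World × ℕ)}

theorem ne_nil (h : IsNode K ℓ) : ℓ ≠ [] := by
  cases h <;> simp

theorem of_suffix (h : IsNode K ℓ) (hs : s <:+ ℓ) (hne : s ≠ []) : IsNode K s := by
  induction h with
  | root =>
    rcases List.suffix_cons_iff.1 hs with rfl | hs
    · exact .root
    · exact absurd (List.suffix_nil.1 hs) hne
  | cons hℓ hv hc ih =>
    rcases List.suffix_cons_iff.1 hs with rfl | hs
    · exact .cons hℓ hv hc
    · exact ih hs

theorem rel_world_of_cons {e : K.World × ℕ} (h : IsNode K (e :: ℓ)) (hℓ : ℓ ≠ []) :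
    K.R (world K ℓ) e.1 := by
  cases h with
  | root => exact absurd rfl hℓ
  | cons _ hR _ => exact hR

theorem backDepth_lt_length (h : IsNode K ℓ) : backDepth ℓ < ℓ.length := by
  cases h with
  | root => simp [backDepth]
  | @cons ℓ v c _ _ hc =>
    rcases eq_or_ne c 0 with rfl | hc0
    · simp [backDepth]
    · simpa [backDepth] using Nat.lt_succ_of_le (hc hc0).1

theorem rtake_backDepth (h : IsNode K ℓ) (hc : backDepth ℓ ≠ 0) :
    IsNode K (ℓ.rtake (backDepth ℓ)) :=
  h.of_suffix (List.rtake_suffix _ _) fun hnil => hc <| by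
    simpa [hnil] using (List.length_rtake_of_le h.backDepth_lt_length.le).symm

theorem rel_world_rtake (h : IsNode K ℓ) (hc : backDepth ℓ ≠ 0) :
    K.R (world K ℓ) (world K (ℓ.rtake (backDepth ℓ))) := by
  cases h with
  | root => exact absurd rfl hc
  | @cons ℓ v c _ _ hv =>
    obtain ⟨hcℓ, hR, -⟩ := hv hc
    rwa [backDepth, List.rtake_cons_of_le _ hcℓ]

theorem backDepth_eq_of_between (h : IsNode K ℓ) (hc : backDepth ℓ ≠ 0) (hs : s <:+ ℓ)
    (hlt : backDepth ℓ < s.length) (hlt' : s.length < ℓ.length) (hsc : backDepth s ≠ 0) :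
    backDepth s = backDepth ℓ := by
  cases h with
  | root => exact absurd rfl hc
  | @cons ℓ v c _ _ hv =>
    obtain ⟨-, -, hbetween⟩ := hv hc
    rcases List.suffix_cons_iff.1 hs with rfl | hs
    · exact absurd hlt' (lt_irrefl _)
    obtain ⟨⟩ | ⟨e, s⟩ := s
    · exact absurd rfl hsc
    · simp only [backDepth, List.length_cons] at hlt hsc ⊢
      exact (hbetween e (List.mem_take_of_cons_suffix hs (by omega))).resolve_left hsc

end IsNode

def IsChild (x y : {ℓ // IsNode K ℓ}) : Prop := ∃ e, y.1 = e :: x.1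

noncomputable def backEdge (x : {ℓ // IsNode K ℓ}) : Option {ℓ // IsNode K ℓ} :=
  if h : backDepth x.1 ≠ 0 then some ⟨x.1.rtake (backDepth x.1), x.2.rtake_backDepth h⟩
  else none

theorem backEdge_eq_some_iff {x y : {ℓ // IsNode K ℓ}} :
    backEdge x = some y ↔ backDepth x.1 ≠ 0 ∧ y.1 = x.1.rtake (backDepth x.1) := by
  unfold backEdge
  split_ifs with h
  · simp [h, Subtype.ext_iff, eq_comm]
  · simp [h]

variable (K) in
noncomputable def unravel : Kripke.{u} AP where
  World := {ℓ // IsNode K ℓ}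
  init := ⟨[(K.init, 0)], .root⟩
  R x y := IsChild x y ∨ backEdge x = some y
  label x := K.label (world K x.1)
  serial x := by
    obtain ⟨v, hv⟩ := K.serial (world K x.1)
    exact ⟨⟨(v, 0) :: x.1, .cons x.2 hv (absurd rfl)⟩, .inl ⟨(v, 0), rfl⟩⟩

theorem transGen_isChild_iff {x y : {ℓ // IsNode K ℓ}} :
    Relation.TransGen IsChild x y ↔ x.1 <:+ y.1 ∧ x.1.length < y.1.length := by
  constructor
  · intro h
    induction h with
    | single hxy =>
      obtain ⟨e, he⟩ := hxy
      simp [he]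
    | tail _ hyz ih =>
      obtain ⟨e, he⟩ := hyz
      rw [he]
      exact ⟨ih.1.trans (List.suffix_cons _ _), by simp; omega⟩
  · obtain ⟨ℓ, hy⟩ := y
    induction ℓ with
    | nil => simp
    | cons e ℓ ih =>
      rintro ⟨hs, hlt⟩
      rcases List.suffix_cons_iff.1 hs with h | hs
      · simp [h] at hlt
      have hℓ : IsNode K ℓ := hy.of_suffix (List.suffix_cons _ _) fun h => x.2.ne_nil <| by
        simpa [h] using hs
      rcases hs.length_le.eq_or_lt with heq | hlt'
      · exact .single ⟨e, by rw [hs.sublist.eq_of_length heq]⟩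
      · exact .tail (ih hℓ ⟨hs, hlt'⟩) ⟨e, rfl⟩

end Unravel

section Decomp

variable {K : Kripke.{u} AP}

theorem isTree_isChild : IsTree (IsChild (K := K)) (unravel K).init := by
  refine ⟨?_, fun x hx => (transGen_isChild_iff.1 hx).2.false, ?_, ?_⟩
  · rintro ⟨ℓ, hℓ⟩
    induction hℓ with
    | root => exact .refl
    | @cons ℓ v c hℓ _ _ ih => exact .tail ih ⟨(v, c), rfl⟩
  · rintro x y y' ⟨e, he⟩ ⟨e', he'⟩
    exact Subtype.ext (List.cons.inj (he.symm.trans he')).2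
  · rintro x ⟨e, he⟩
    exact x.2.ne_nil (List.cons.inj he).2.symm

theorem transGen_isChild_of_backEdge_eq_some {x y : {ℓ // IsNode K ℓ}} (h : backEdge x = some y) :
    Relation.TransGen IsChild y x := by
  obtain ⟨hc, hy⟩ := backEdge_eq_some_iff.1 h
  rw [transGen_isChild_iff, hy, List.length_rtake_of_le x.2.backDepth_lt_length.le]
  exact ⟨List.rtake_suffix _ _, x.2.backDepth_lt_length⟩

theorem backEdge_eq_of_between {x₁ x₂ y₂ : {ℓ // IsNode K ℓ}} (h₁ : (backEdge x₁).isSome)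
    (h₂ : backEdge x₂ = some y₂) (hy₂ : Relation.TransGen IsChild y₂ x₁)
    (hx : Relation.TransGen IsChild x₁ x₂) : backEdge x₁ = backEdge x₂ := by
  obtain ⟨y₁, h₁⟩ := Option.isSome_iff_exists.1 h₁
  obtain ⟨hc₁, hy₁⟩ := backEdge_eq_some_iff.1 h₁
  obtain ⟨hc₂, hy₂'⟩ := backEdge_eq_some_iff.1 h₂
  obtain ⟨-, hlt⟩ := transGen_isChild_iff.1 hy₂
  obtain ⟨hs, hlt'⟩ := transGen_isChild_iff.1 hx
  rw [hy₂', List.length_rtake_of_le x₂.2.backDepth_lt_length.le] at hlt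
  have hc := x₂.2.backDepth_eq_of_between hc₂ hs hlt hlt' hc₁
  rw [h₁, h₂, Subtype.ext (by rw [hy₁, hy₂', hc, hs.rtake_eq hlt.le] : y₁.1 = y₂.1)]

theorem isTreeDecomp_unravel : IsTreeDecomp (unravel K) IsChild backEdge :=
  ⟨isTree_isChild, fun _ _ => Iff.rfl, fun _ _ => transGen_isChild_of_backEdge_eq_some,
    fun _ _ _ h₁ h₂ => backEdge_eq_of_between h₁ h₂⟩

end Decomp

section Lift

variable {K : Kripke.{u} AP} (x : {ℓ // IsNode K ℓ}) (p : ℕ → K.World)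

open Classical in
noncomputable def liftBackDepth (k : ℕ) : ℕ := if p k = p 0 then x.1.length else 0

/- The lift of `p` from `x` is `liftStack x p j ++ x` at time `j`. It returns to `x` by a back
edge whenever `p` revisits `p 0`, which is why every entry it pushes whose successor on `p` is
`p 0` carries a back edge to `x`. -/
open Classical in
noncomputable def liftStack : ℕ → List (K.World × ℕ)
  | 0 => []
  | j + 1 => if p (j + 1) = p 0 ∧ liftStack j ≠ [] then []
    else (p (j + 1), liftBackDepth x p (j + 2)) :: liftStack j

variable {x p}

theorem liftStack_succ_of_pos {j : ℕ} (h : p (j + 1) = p 0 ∧ liftStack x p j ≠ []) :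
    liftStack x p (j + 1) = [] := by
  rw [liftStack, if_pos h]

theorem liftStack_succ_of_neg {j : ℕ} (h : ¬(p (j + 1) = p 0 ∧ liftStack x p j ≠ [])) :
    liftStack x p (j + 1) = (p (j + 1), liftBackDepth x p (j + 2)) :: liftStack x p j := by
  rw [liftStack, if_neg h]

theorem mem_liftStack {j : ℕ} {e : K.World × ℕ} (he : e ∈ liftStack x p j) :
    e.2 = 0 ∨ e.2 = x.1.length := by
  induction j with
  | zero => simp [liftStack] at he
  | succ j ih =>
    unfold liftStack at he
    split_ifs at he
    · simp at he
    rcases List.mem_cons.1 he with rfl | he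
    · unfold liftBackDepth; split_ifs <;> simp
    · exact ih he

theorem liftStack_eq_cons {j : ℕ} (h : liftStack x p j ≠ []) :
    ∃ M, liftStack x p j = (p j, liftBackDepth x p (j + 1)) :: M := by
  cases j with
  | zero => exact absurd rfl h
  | succ j =>
    by_cases hj : p (j + 1) = p 0 ∧ liftStack x p j ≠ []
    · exact absurd (liftStack_succ_of_pos hj) h
    · exact ⟨_, liftStack_succ_of_neg hj⟩

theorem world_liftStack_append (h0 : p 0 = world K x.1) (j : ℕ) :
    world K (liftStack x p j ++ x.1) = p j := by
  by_cases h : liftStack x p j = []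
  · rw [h, List.nil_append, ← h0]
    cases j with
    | zero => rfl
    | succ j =>
      by_contra hne
      exact List.cons_ne_nil _ _ ((liftStack_succ_of_neg fun hj => hne hj.1.symm).symm.trans h)
  · obtain ⟨M, hM⟩ := liftStack_eq_cons h
    rw [hM]
    rfl

theorem backDepth_liftStack_append {j : ℕ} (h : liftStack x p j ≠ []) :
    backDepth (liftStack x p j ++ x.1) = liftBackDepth x p (j + 1) := by
  obtain ⟨M, hM⟩ := liftStack_eq_cons h
  rw [hM]
  rfl

theorem canAttach_liftStack_append (hp : IsPath K p) (h0 : p 0 = world K x.1) (j : ℕ) :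
    CanAttach K (liftStack x p j ++ x.1) (p (j + 1)) (liftBackDepth x p (j + 2)) := by
  intro hc
  have hp2 : p (j + 2) = p 0 := by
    by_contra h
    simp [liftBackDepth, h] at hc
  have hd : liftBackDepth x p (j + 2) = x.1.length := if_pos hp2
  rw [hd, List.rtake_append_length, List.length_append, Nat.add_sub_cancel,
    List.take_left' rfl, ← h0, ← hp2]
  exact ⟨Nat.le_add_left _ _, hp (j + 1), fun e he => mem_liftStack he⟩

theorem isNode_liftStack_append (hp : IsPath K p) (h0 : p 0 = world K x.1) (j : ℕ) :
    IsNode K (liftStack x p j ++ x.1) := by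
  induction j with
  | zero => exact x.2
  | succ j ih =>
    by_cases h : p (j + 1) = p 0 ∧ liftStack x p j ≠ []
    · rw [liftStack_succ_of_pos h]
      exact x.2
    · rw [liftStack_succ_of_neg h]
      exact .cons ih (world_liftStack_append h0 j ▸ hp j) (canAttach_liftStack_append hp h0 j)

noncomputable def liftPath (hp : IsPath K p) (h0 : p 0 = world K x.1) (j : ℕ) :
    {ℓ // IsNode K ℓ} :=
  ⟨liftStack x p j ++ x.1, isNode_liftStack_append hp h0 j⟩

variable (hp : IsPath K p) (h0 : p 0 = world K x.1)

theorem liftPath_zero : liftPath hp h0 0 = x := rfl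

theorem world_comp_liftPath : (fun y : {ℓ // IsNode K ℓ} => world K y.1) ∘ liftPath hp h0 = p :=
  funext (world_liftStack_append h0)

theorem isPath_liftPath : IsPath (unravel K) (liftPath hp h0) := by
  intro j
  by_cases h : p (j + 1) = p 0 ∧ liftStack x p j ≠ []
  · refine .inr (backEdge_eq_some_iff.2 ⟨?_, ?_⟩) <;>
      simp only [liftPath, backDepth_liftStack_append h.2, liftBackDepth, if_pos h.1]
    · exact x.2.ne_nil ∘ List.length_eq_zero_iff.1
    · rw [List.rtake_append_length, liftStack_succ_of_pos h, List.nil_append]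
  · exact .inl ⟨_, congrArg (· ++ x.1) (liftStack_succ_of_neg h)⟩

theorem isCycle_liftPath (hcyc : IsCycle K p) : IsCycle (unravel K) (liftPath hp h0) := by
  refine ⟨isPath_liftPath hp h0, fun i => ?_⟩
  obtain ⟨j, hij, hj⟩ := hcyc.2 (i + 1)
  obtain ⟨j, rfl⟩ : ∃ j', j = j' + 1 := ⟨j - 1, by omega⟩
  by_cases h : liftStack x p j = []
  · exact ⟨j, by omega, Subtype.ext (congrArg (· ++ x.1) h)⟩
  · refine ⟨j + 1, by omega, Subtype.ext (congrArg (· ++ x.1) ?_)⟩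
    rw [liftStack_succ_of_pos ⟨hj, h⟩]
    rfl

end Lift

theorem isCover_world (K : Kripke.{u} AP) :
    IsCover (K' := unravel K) fun y => world K y.1 where
  label_eq _ := rfl
  rel_map {y z} := by
    rintro (⟨e, he⟩ | h)
    · have hz := z.2
      rw [he] at hz ⊢
      exact hz.rel_world_of_cons y.2.ne_nil
    · obtain ⟨hc, hz⟩ := backEdge_eq_some_iff.1 h
      rw [hz]
      exact y.2.rel_world_rtake hc
  exists_lift x p hp h0 := ⟨liftPath hp h0, isPath_liftPath hp h0, liftPath_zero hp h0,
    world_comp_liftPath hp h0, isCycle_liftPath hp h0⟩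

/-- tree-like model property: every satisfiable Cycle-CTL* state formula is
satisfiable in a Kripke structure which is a tree with back edges. -/
theorem stmt11 {AP : Type} (φ : StateForm AP) (K : Kripke.{u} AP) (h : Sat K φ) :
    ∃ K' : Kripke.{u} AP, IsTreeWithBackEdges K' ∧ Sat K' φ :=
  ⟨unravel K, ⟨_, _, isTreeDecomp_unravel⟩, ((isCover_world K).satS_iff φ _).2 h⟩

end CycleCTL
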